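/- arXiv:1410.2712 — 7 statements merged into one kernel-verified Lean document; each statement's English description precedes it below -/
import Mathlib

section
/- For two consecutive intervals in the same level, the gap of postorder ordinal numbers satisfies t^ℓ(j) := a^ℓ(j) − a^ℓ(j−1) − 1 = m(j) + 2^{N−ℓ+1} − 2 for all 1 ≤ j ≤ 2^ℓ − 1, where m(j) is the 2-adic valuation of j when j is even and m(j) = 0 when j is odd. -/
open Finset

/-- The set of dyadic intervals in `[0,1]` of length `≥ 2^{-N}`, encoded as
pairs `(ℓ, k)` with `ℓ ≤ N` and `k < 2^ℓ`, representing `I_{ℓ,k} = [k/2^ℓ, (k+1)/2^ℓ)`. -/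
def DN (N : ℕ) : Finset (ℕ × ℕ) :=
  (Finset.range (N + 1) ×ˢ Finset.range (2 ^ N)).filter fun p => p.2 < 2 ^ p.1

/-- `subInt q p` means the dyadic interval encoded by `q` is contained in the one
encoded by `p`. -/
def subInt (q p : ℕ × ℕ) : Prop := p.1 ≤ q.1 ∧ q.2 / 2 ^ (q.1 - p.1) = p.2

instance (q p : ℕ × ℕ) : Decidable (subInt q p) :=
  inferInstanceAs (Decidable (_ ∧ _))

/-- Postorder on dyadic intervals: `q ⪯ p` iff `q ⊆ p`, or they are disjoint with
`q` to the left of `p`. -/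
def postLE (q p : ℕ × ℕ) : Prop :=
  subInt q p ∨ (q.2 + 1) * 2 ^ p.1 ≤ p.2 * 2 ^ q.1

instance (q p : ℕ × ℕ) : Decidable (postLE q p) :=
  inferInstanceAs (Decidable (_ ∨ _))

/-- Lexicographic order: first by level, then by position. -/
def lexLE (q p : ℕ × ℕ) : Prop := q.1 < p.1 ∨ (q.1 = p.1 ∧ q.2 ≤ p.2)

instance (q p : ℕ × ℕ) : Decidable (lexLE q p) :=
  inferInstanceAs (Decidable (_ ∨ _))

/-- Postorder ordinal number (starting at 1) of the interval `p` in `D_N`. -/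
def postOrdinal (N : ℕ) (p : ℕ × ℕ) : ℕ :=
  ((DN N).filter fun q => postLE q p).card

/-- Lexicographic ordinal number (starting at 1) of the interval `p` in `D_N`. -/
def lexOrdinal (N : ℕ) (p : ℕ × ℕ) : ℕ :=
  ((DN N).filter fun q => lexLE q p).card

/-!
At a level `m < ℓ` exactly `⌊j / 2^(ℓ-m)⌋` intervals lie to the left of `I_{ℓ,j}`, and at a level
`m ≥ ℓ` exactly `(j + 1) 2^(m-ℓ)` intervals lie to its left or inside it. Passing from `j` to
`j + 1` thus adds `2^(N-ℓ+1) - 1` intervals on the levels `ℓ, …, N`, and on the levels below `ℓ`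
one interval for each `1 ≤ d ≤ ℓ` with `2^d ∣ j + 1`, that is `v₂(j + 1)` of them.
-/

lemma card_filter_range_of_iff_lt {M c : ℕ} (hc : c ≤ M) {P : ℕ → Prop} [DecidablePred P]
    (hP : ∀ k, P k ↔ k < c) : #{k ∈ range M | P k} = c := by
  rw [show {k ∈ range M | P k} = range c by ext k; simp only [mem_filter, mem_range, hP]; omega,
    card_range]

lemma sum_range_ite_lt {M : Type*} [AddCommMonoid M] {ℓ N : ℕ} (hℓ : ℓ ≤ N) (f g : ℕ → M) :
    ∑ m ∈ range (N + 1), (if m < ℓ then f (ℓ - m) else g (m - ℓ))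
      = ∑ i ∈ range ℓ, f (i + 1) + ∑ i ∈ range (N - ℓ + 1), g i := by
  rw [show N + 1 = ℓ + (N - ℓ + 1) by omega, sum_range_add, ← sum_range_reflect]
  congr 1
  · refine sum_congr rfl fun i hi => ?_
    rw [mem_range] at hi
    rw [if_pos (by omega), show ℓ - (ℓ - 1 - i) = i + 1 by omega]
  · refine sum_congr rfl fun i _ => ?_
    rw [if_neg (by omega), Nat.add_sub_cancel_left]

lemma card_filter_range_pow_succ_dvd {p n b : ℕ} (hp : p ≠ 1) (hn : n ≠ 0)
    (hb : padicValNat p n ≤ b) : #{i ∈ range b | p ^ (i + 1) ∣ n} = padicValNat p n :=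
  card_filter_range_of_iff_lt hb fun i => by rw [Nat.pow_dvd_iff_le_padicValNat hp hn]; omega

lemma padicValNat_lt_of_lt_pow {p n b : ℕ} (hn : n ≠ 0) (hb : n < p ^ b) : padicValNat p n < b :=
  (padicValNat_le_nat_log n).trans_lt (Nat.log_lt_of_lt_pow hn hb)

lemma postLE_iff_of_lt {m k ℓ j : ℕ} (h : m < ℓ) :
    postLE (m, k) (ℓ, j) ↔ k < j / 2 ^ (ℓ - m) := by
  have hpow : 2 ^ ℓ = 2 ^ (ℓ - m) * 2 ^ m := by rw [← pow_add, Nat.sub_add_cancel h.le]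
  have hsub : ¬ subInt (m, k) (ℓ, j) := fun hs => absurd hs.1 (by simpa using h)
  rw [postLE, or_iff_right hsub, hpow, ← mul_assoc, Nat.mul_le_mul_right_iff (by positivity),
    ← Nat.le_div_iff_mul_le (by positivity)]
  rfl

lemma postLE_iff_of_le {m k ℓ j : ℕ} (h : ℓ ≤ m) :
    postLE (m, k) (ℓ, j) ↔ k < (j + 1) * 2 ^ (m - ℓ) := by
  obtain ⟨d, rfl⟩ := Nat.exists_eq_add_of_le h
  have hd : 0 < 2 ^ d := by positivity
  have hinside : subInt (ℓ + d, k) (ℓ, j) ↔ j * 2 ^ d ≤ k ∧ k < j * 2 ^ d + 2 ^ d := by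
    rw [subInt, Nat.div_eq_iff (by positivity)]
    simp only [Nat.add_sub_cancel_left, le_add_iff_nonneg_right, zero_le, true_and]
    omega
  have hleft : (k + 1) * 2 ^ ℓ ≤ j * 2 ^ (ℓ + d) ↔ k + 1 ≤ j * 2 ^ d := by
    rw [pow_add, mul_comm (2 ^ ℓ), ← mul_assoc, Nat.mul_le_mul_right_iff (by positivity)]
  show subInt _ _ ∨ (k + 1) * 2 ^ ℓ ≤ j * 2 ^ (ℓ + d) ↔ _
  rw [hinside, hleft, Nat.add_sub_cancel_left, add_mul, one_mul]
  omega

lemma card_postLE_level {N ℓ j m : ℕ} (hj : j < 2 ^ ℓ) (hm : m ≤ N) :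
    #{k ∈ range (2 ^ N) | k < 2 ^ m ∧ postLE (m, k) (ℓ, j)}
      = if m < ℓ then j / 2 ^ (ℓ - m) else (j + 1) * 2 ^ (m - ℓ) := by
  have hmN : 2 ^ m ≤ 2 ^ N := Nat.pow_le_pow_right two_pos hm
  split_ifs with h
  · have hpow : 2 ^ ℓ = 2 ^ m * 2 ^ (ℓ - m) := by rw [← pow_add, Nat.add_sub_cancel' h.le]
    have hlt : j / 2 ^ (ℓ - m) < 2 ^ m := (Nat.div_lt_iff_lt_mul (by positivity)).2 (hpow ▸ hj)
    refine card_filter_range_of_iff_lt (by omega) fun k => ?_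
    rw [postLE_iff_of_lt h]
    omega
  · have hpow : 2 ^ m = 2 ^ ℓ * 2 ^ (m - ℓ) := by rw [← pow_add, Nat.add_sub_cancel' (by omega)]
    have hle : (j + 1) * 2 ^ (m - ℓ) ≤ 2 ^ m := hpow ▸ Nat.mul_le_mul_right _ hj
    refine card_filter_range_of_iff_lt (by omega) fun k => ?_
    rw [postLE_iff_of_le (by omega)]
    omega

lemma postOrdinal_eq {N ℓ j : ℕ} (hℓ : ℓ ≤ N) (hj : j < 2 ^ ℓ) :
    postOrdinal N (ℓ, j)
      = ∑ i ∈ range ℓ, j / 2 ^ (i + 1) + (j + 1) * ∑ i ∈ range (N - ℓ + 1), 2 ^ i := by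
  rw [postOrdinal, DN, filter_filter, card_filter, sum_product, mul_sum,
    ← sum_range_ite_lt hℓ (fun d => j / 2 ^ d) (fun d => (j + 1) * 2 ^ d)]
  refine sum_congr rfl fun m hm => ?_
  rw [← card_filter]
  exact card_postLE_level hj (Nat.lt_succ_iff.1 (mem_range.1 hm))

lemma postOrdinal_succ {N ℓ j : ℕ} (hℓ : ℓ ≤ N) (hj : j + 1 < 2 ^ ℓ) :
    postOrdinal N (ℓ, j + 1)
      = postOrdinal N (ℓ, j) + padicValNat 2 (j + 1) + (2 ^ (N - ℓ + 1) - 1) := by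
  have hdiv : ∑ i ∈ range ℓ, (j + 1) / 2 ^ (i + 1)
      = ∑ i ∈ range ℓ, j / 2 ^ (i + 1) + padicValNat 2 (j + 1) := by
    simp only [Nat.succ_div, sum_add_distrib, sum_boole, Nat.cast_id]
    rw [card_filter_range_pow_succ_dvd (by norm_num) j.succ_ne_zero
      (padicValNat_lt_of_lt_pow j.succ_ne_zero hj).le]
  have hgeom : ∑ i ∈ range (N - ℓ + 1), 2 ^ i = 2 ^ (N - ℓ + 1) - 1 := by
    simpa using Nat.geomSum_eq le_rfl (N - ℓ + 1)
  rw [postOrdinal_eq hℓ hj, postOrdinal_eq hℓ (by omega), hdiv, hgeom]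
  ring

/-- The gap of postorder ordinal numbers of two consecutive intervals in the same level:
`t^ℓ(j) = a^ℓ(j) - a^ℓ(j-1) - 1 = m(j) + 2^{N-ℓ+1} - 2`, where `m(j)` is the
2-adic valuation of `j` (which is `0` for odd `j`). -/
theorem postOrdinal_gap (N ℓ j : ℕ) (hℓ : ℓ ≤ N) (hj1 : 1 ≤ j) (hj2 : j ≤ 2 ^ ℓ - 1) :
    postOrdinal N (ℓ, j) - postOrdinal N (ℓ, j - 1) - 1
      = padicValNat 2 j + 2 ^ (N - ℓ + 1) - 2 := by
  obtain ⟨i, rfl⟩ := Nat.exists_eq_add_of_le' hj1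
  have hlevel : 1 ≤ 2 ^ ℓ := Nat.one_le_two_pow
  have hdepth : 2 ≤ 2 ^ (N - ℓ + 1) := Nat.le_self_pow (by omega) 2
  rw [Nat.add_sub_cancel, postOrdinal_succ hℓ (by omega)]
  omega
end

section
/- Let L = Level(a^ℓ(k)) := ⌊log₂ a^ℓ(k)⌋. Then L = ⌈log₂(k+1)⌉ + N − ℓ for all 0 ≤ ℓ ≤ N and 0 ≤ k ≤ 2^ℓ − 1, where a^ℓ(k) = (k+1)(2^{N−ℓ+1}−1) + Σ_{j=1}^{k} m(j). -/
/-- The explicit formula for the postorder ordinal number of `I_{ℓ,k}` in `D_N`: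
`a^ℓ(k) = (k+1)(2^{N-ℓ+1} - 1) + Σ_{j=1}^k m(j)`, where `m(j) = padicValNat 2 j`
is the 2-adic valuation of `j` (zero for odd `j`). -/
def aPost (N ℓ k : ℕ) : ℕ :=
  (k + 1) * (2 ^ (N - ℓ + 1) - 1) + ∑ j ∈ Finset.Icc 1 k, padicValNat 2 j

lemma sum_padicValNat_eq_factorial (k : ℕ) :
    ∑ j ∈ Finset.Icc 1 k, padicValNat 2 j = padicValNat 2 (Nat.factorial k) := by
  induction k with
  | zero => simp
  | succ k ih =>
    rw [Finset.sum_Icc_succ_top (by omega), ih, Nat.factorial_succ,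
      padicValNat.mul (by omega) (Nat.factorial_ne_zero k)]
    ring

lemma sum_padicValNat_eq (k : ℕ) :
    ∑ j ∈ Finset.Icc 1 k, padicValNat 2 j = k - (Nat.digits 2 k).sum := by
  rw [sum_padicValNat_eq_factorial]
  have h := sub_one_mul_padicValNat_factorial (p := 2) k
  simpa using h

lemma digitSum_aux : ∀ n : ℕ, 1 ≤ n → (Nat.digits 2 n).sum + 2 ^ (Nat.log 2 n) ≤ n + 1 := by
  intro n
  induction n using Nat.strong_induction_on with
  | _ n ih =>
    intro hn
    rcases Nat.lt_or_ge n 2 with h2 | h2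
    · interval_cases n
      · simp
    · have hd : Nat.digits 2 n = n % 2 :: Nat.digits 2 (n / 2) :=
        Nat.digits_def' (by norm_num) (by omega)
      have hlogpos : 0 < Nat.log 2 n := Nat.log_pos (by norm_num) h2
      have hlogdiv : Nat.log 2 (n / 2) = Nat.log 2 n - 1 := Nat.log_div_base 2 n
      have hlog : Nat.log 2 n = Nat.log 2 (n / 2) + 1 := by omega
      have hih := ih (n / 2) (by omega) (by omega)
      have hpow : 2 ^ (Nat.log 2 (n / 2)) ≤ n / 2 :=
        Nat.pow_log_le_self 2 (by omega)
      rw [hd, hlog]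
      simp only [List.sum_cons, pow_succ]
      have hmod : n = 2 * (n / 2) + n % 2 := (Nat.div_add_mod n 2).symm ▸ by omega
      omega

/-- `⌊log₂ a^ℓ(k)⌋ = ⌈log₂(k+1)⌉ + N - ℓ`. -/
theorem level_of_postOrdinal (N ℓ k : ℕ) (hℓ : ℓ ≤ N) (hk : k ≤ 2 ^ ℓ - 1) :
    Nat.log 2 (aPost N ℓ k) = Nat.clog 2 (k + 1) + (N - ℓ) := by
  set M := N - ℓ with hM
  set c := Nat.clog 2 (k + 1) with hc
  set s := (Nat.digits 2 k).sum with hs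
  set P := 2 ^ (M + 1) with hP
  have hP2 : 2 ≤ P := by
    have : 2 ^ 1 ≤ 2 ^ (M + 1) := Nat.pow_le_pow_right (by norm_num) (by omega)
    simpa using this
  have hsk : s ≤ k := Nat.digit_sum_le 2 k
  -- key identity: aPost + s + 1 = (k+1) * P
  have hkey : aPost N ℓ k + s + 1 = (k + 1) * P := by
    have h1 : aPost N ℓ k = (k + 1) * (P - 1) + (k - s) := by
      rw [aPost, sum_padicValNat_eq]
    have h2 : (k + 1) * (P - 1) = (k + 1) * P - (k + 1) := by
      rw [Nat.mul_sub, mul_one]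
    have h3 : k + 1 ≤ (k + 1) * P := Nat.le_mul_of_pos_right _ (by omega)
    omega
  have hcle : k + 1 ≤ 2 ^ c := Nat.le_pow_clog (by norm_num) _
  -- upper bound
  have hupper : aPost N ℓ k < 2 ^ (c + M + 1) := by
    have : (k + 1) * P ≤ 2 ^ c * P := Nat.mul_le_mul_right _ hcle
    have hpow : 2 ^ c * P = 2 ^ (c + M + 1) := by
      rw [hP, ← pow_add, add_assoc]
    omega
  -- lower bound
  have hlower : 2 ^ (c + M) ≤ aPost N ℓ k := by
    rcases Nat.eq_zero_or_pos k with rfl | hk1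
    · have hc0 : c = 0 := by simp [hc]
      have hs0 : s = 0 := by simp [hs]
      have : 2 * 2 ^ M = P := by rw [hP, pow_succ]; ring
      have h1 : (1 : ℕ) ≤ 2 ^ M := Nat.one_le_two_pow
      rw [hc0, zero_add]
      omega
    · have hc1 : 1 ≤ c := Nat.clog_pos (by norm_num) (by omega)
      have h2c : 2 ^ (c - 1) < k + 1 := Nat.pow_pred_clog_lt_self (by norm_num) (by omega)
      set L := Nat.log 2 k with hL
      have hLk : 2 ^ L ≤ k := Nat.pow_log_le_self 2 (by omega)
      have hkL : k < 2 ^ (L + 1) := Nat.lt_pow_succ_log_self (by norm_num) k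
      have hcL : c - 1 ≤ L := by
        by_contra hcon
        have : L + 1 ≤ c - 1 := by omega
        have : 2 ^ (L + 1) ≤ 2 ^ (c - 1) := Nat.pow_le_pow_right (by norm_num) this
        omega
      have hpowcL : 2 ^ (c - 1) ≤ 2 ^ L := Nat.pow_le_pow_right (by norm_num) hcL
      have hds : s + 2 ^ L ≤ k + 1 := digitSum_aux k (by omega)
      set t := k + 1 - 2 ^ (c - 1) with ht
      have ht1 : 1 ≤ t := by omega
      have hst : s + 1 ≤ 2 * t := by omega
      have hsplit : (k + 1) * P = 2 ^ (c + M) + t * P := by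
        have hkt : k + 1 = 2 ^ (c - 1) + t := by omega
        rw [hkt, add_mul, hP, ← pow_add]
        congr 2
        omega
      have htP : s + 1 ≤ t * P := by
        calc s + 1 ≤ 2 * t := hst
        _ = t * 2 := by ring
        _ ≤ t * P := Nat.mul_le_mul_left _ hP2
      omega
  have := Nat.log_eq_of_pow_le_of_lt_pow hlower (by simpa [add_assoc] using hupper)
  omega
end

section
/- With a^ℓ(k) as below, a^ℓ(2^{s−1}) = 2^{N−ℓ+1} + 2^{N−ℓ+s} − 2 for all 1 ≤ s ≤ ℓ ≤ N. -/
lemma sum_padic_eq_fact (n : ℕ) :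
    ∑ j ∈ Finset.Icc 1 n, padicValNat 2 j = padicValNat 2 (Nat.factorial n) := by
  induction n with
  | zero => simp
  | succ n ih =>
      rw [Finset.sum_Icc_succ_top (by omega), ih, Nat.factorial_succ,
        padicValNat.mul (by positivity) (Nat.factorial_pos n).ne']
      ring

lemma digits_sum_pow (t : ℕ) : (Nat.digits 2 (2 ^ t)).sum = 1 := by
  induction t with
  | zero => simp
  | succ t ih =>
      rw [pow_succ, mul_comm, Nat.digits_def' (by norm_num) (by positivity)]
      simpa using ih

lemma sum_padic_pow (t : ℕ) :
    ∑ j ∈ Finset.Icc 1 (2 ^ t), padicValNat 2 j = 2 ^ t - 1 := by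
  have h := sub_one_mul_padicValNat_factorial (p := 2) (2 ^ t)
  rw [digits_sum_pow] at h
  rw [sum_padic_eq_fact]
  omega

/-- `a^ℓ(2^{s-1}) = 2^{N-ℓ+1} + 2^{N-ℓ+s} - 2` for `1 ≤ s ≤ ℓ ≤ N`. -/
theorem aPost_pow (N ℓ s : ℕ) (hs : 1 ≤ s) (hsℓ : s ≤ ℓ) (hℓ : ℓ ≤ N) :
    aPost N ℓ (2 ^ (s - 1)) = 2 ^ (N - ℓ + 1) + 2 ^ (N - ℓ + s) - 2 := by
  unfold aPost
  rw [sum_padic_pow]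
  set A := 2 ^ (N - ℓ + 1) with hA
  set B := 2 ^ (s - 1) with hB
  have hC : A * B = 2 ^ (N - ℓ + s) := by
    rw [hA, hB, ← pow_add]; congr 1; omega
  have hA2 : 2 ≤ A := by rw [hA]; exact le_self_pow₀ (by omega) (by norm_num)
  have hB1 : 1 ≤ B := Nat.one_le_two_pow
  have h1 : (B + 1) * (A - 1) = A * B + A - (B + 1) := by
    rw [Nat.mul_sub_one]; congr 1; ring
  have h2 : 2 * B ≤ A * B := Nat.mul_le_mul_right B hA2
  rw [← hC]
  omega
end

section
/- With a^ℓ(k) as below, a^ℓ(2^s − 1) = 2^{N−ℓ+s+1} − s − 1 for all 1 ≤ s ≤ ℓ ≤ N. -/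
theorem Nat.sum_Icc_padicValNat_eq_padicValNat_factorial (p : ℕ) [Fact p.Prime] (n : ℕ) :
    ∑ j ∈ Finset.Icc 1 n, padicValNat p j = padicValNat p n.factorial := by
  induction n with
  | zero => simp
  | succ n ih =>
    rw [Finset.sum_Icc_succ_top (by omega), ih, Nat.factorial_succ,
      padicValNat.mul n.succ_ne_zero n.factorial_ne_zero, add_comm]

theorem Nat.digits_pow_sub_one {b : ℕ} (hb : 2 ≤ b) (s : ℕ) :
    b.digits (b ^ s - 1) = List.replicate s (b - 1) := by
  induction s with
  | zero => simp
  | succ s ih =>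
    have hpos : 0 < b ^ s := by positivity
    have hsplit : b ^ (s + 1) - 1 = (b - 1) + b * (b ^ s - 1) := by
      rw [pow_succ, Nat.mul_sub, mul_one, mul_comm]
      have : b ≤ b * b ^ s := Nat.le_mul_of_pos_right b hpos
      omega
    rw [hsplit, Nat.digits_add b hb _ _ (by omega) (Or.inl (by omega)), ih,
      List.replicate_succ]

theorem Nat.sub_one_mul_padicValNat_factorial_pow_sub_one (p : ℕ) [hp : Fact p.Prime] (s : ℕ) :
    (p - 1) * padicValNat p (p ^ s - 1).factorial = p ^ s - 1 - s * (p - 1) := by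
  rw [sub_one_mul_padicValNat_factorial, Nat.digits_pow_sub_one hp.out.two_le,
    List.sum_replicate, smul_eq_mul]

theorem sum_Icc_padicValNat_two_pow_sub_one (s : ℕ) :
    ∑ j ∈ Finset.Icc 1 (2 ^ s - 1), padicValNat 2 j = 2 ^ s - 1 - s := by
  simpa [Nat.sum_Icc_padicValNat_eq_padicValNat_factorial] using
    Nat.sub_one_mul_padicValNat_factorial_pow_sub_one 2 s

theorem aPost_pow_sub_one_general (N ℓ s : ℕ) :
    aPost N ℓ (2 ^ s - 1) = 2 ^ (N - ℓ + s + 1) - s - 1 := by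
  have hs : s + 1 ≤ 2 ^ s := Nat.lt_two_pow_self
  have hpow : 2 ^ (N - ℓ + s + 1) = 2 ^ s * 2 ^ (N - ℓ + 1) := by ring
  have hle : 2 ^ s ≤ 2 ^ s * 2 ^ (N - ℓ + 1) := Nat.le_mul_of_pos_right _ (by positivity)
  rw [aPost, sum_Icc_padicValNat_two_pow_sub_one, Nat.sub_add_cancel (by omega), Nat.mul_sub,
    mul_one, hpow]
  omega

/-- `a^ℓ(2^s - 1) = 2^{N-ℓ+s+1} - s - 1` for `1 ≤ s ≤ ℓ ≤ N`. -/
theorem aPost_pow_sub_one (N ℓ s : ℕ) (hs : 1 ≤ s) (hsℓ : s ≤ ℓ) (hℓ : ℓ ≤ N) :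
    aPost N ℓ (2 ^ s - 1) = 2 ^ (N - ℓ + s + 1) - s - 1 :=
  aPost_pow_sub_one_general N ℓ s
end

section
/- The postorder rearrangement τ_N maps the complete subtree T^N_{ℓ,0} = {I ∈ D_N : I ⊆ I_{ℓ,0}} bijectively onto D_{N−ℓ} (the set of dyadic intervals of length ≥ 2^{−(N−ℓ)}), hence ⟦τ_N(T^N_{ℓ,0})⟧ = N − ℓ + 1. -/
open Finset

/-- Length of the dyadic interval encoded by `p`: `2^{-ℓ}`. -/
noncomputable def len (p : ℕ × ℕ) : ℝ := (2 : ℝ)⁻¹ ^ p.1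

/-- Carleson constant of a finite collection of (encoded) dyadic intervals;
`sSup ∅ = 0` in `ℝ`, so the empty collection gets `0`. -/
noncomputable def carleson (C : Finset (ℕ × ℕ)) : ℝ :=
  sSup {v : ℝ | ∃ p ∈ C, v = (∑ q ∈ C.filter (fun q => subInt q p), len q) / len p}

/-- The complete dyadic subtree `T^N_{ℓ,k} = {I ∈ D_N : I ⊆ I_{ℓ,k}}`. -/
def subtreeT (N ℓ k : ℕ) : Finset (ℕ × ℕ) :=
  (DN N).filter fun q => subInt q (ℓ, k)


/- The left subtree `T^N_{ℓ,0}` is closed under postorder predecessors in `D_N`, so its members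
come first in postorder and have ordinals at most `#T^N_{ℓ,0}`. That number equals `#D_{N-ℓ}`, and
an interval with lexicographic ordinal at most `#D_{N-ℓ}` lies in `D_{N-ℓ}`, since all of `D_{N-ℓ}`
precedes any interval of a deeper level. Hence `τ_N` maps `T^N_{ℓ,0}` injectively, thus bijectively,
onto `D_{N-ℓ}`, whose Carleson constant is attained at `[0,1]`: every interval `I` of level `j` has
`2^{i-j}` subintervals of level `i`, contributing `|I|` each for `j ≤ i ≤ N-ℓ`. -/

lemma mem_DN {M : ℕ} {p : ℕ × ℕ} : p ∈ DN M ↔ p.1 ≤ M ∧ p.2 < 2 ^ p.1 := by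
  simp only [DN, mem_filter, mem_product, mem_range]
  constructor
  · rintro ⟨⟨h1, _⟩, h3⟩
    exact ⟨by omega, h3⟩
  · rintro ⟨h1, h2⟩
    exact ⟨⟨by omega, h2.trans_le (Nat.pow_le_pow_right two_pos h1)⟩, h2⟩

lemma DN_mono {a b : ℕ} (h : a ≤ b) : DN a ⊆ DN b := fun _ hp =>
  mem_DN.mpr ⟨(mem_DN.mp hp).1.trans h, (mem_DN.mp hp).2⟩

lemma subInt_iff {q p : ℕ × ℕ} :
    subInt q p ↔ p.1 ≤ q.1 ∧ p.2 * 2 ^ (q.1 - p.1) ≤ q.2 ∧ q.2 < (p.2 + 1) * 2 ^ (q.1 - p.1) := by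
  rw [subInt, Nat.div_eq_iff (Nat.two_pow_pos _), add_one_mul]
  have := Nat.two_pow_pos (q.1 - p.1)
  omega

lemma subInt_zero_iff {q : ℕ × ℕ} {ℓ : ℕ} : subInt q (ℓ, 0) ↔ ℓ ≤ q.1 ∧ q.2 < 2 ^ (q.1 - ℓ) := by
  simp [subInt_iff]

lemma subInt_trans {r p s : ℕ × ℕ} (h₁ : subInt r p) (h₂ : subInt p s) : subInt r s := by
  refine ⟨h₂.1.trans h₁.1, ?_⟩
  rw [show r.1 - s.1 = (r.1 - p.1) + (p.1 - s.1) by have := h₁.1; have := h₂.1; omega,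
    pow_add, ← Nat.div_div_eq_div_mul, h₁.2, h₂.2]

lemma subInt_zero_of_left {r p : ℕ × ℕ} {ℓ : ℕ}
    (hleft : (r.2 + 1) * 2 ^ p.1 ≤ p.2 * 2 ^ r.1) (hp : subInt p (ℓ, 0)) :
    subInt r (ℓ, 0) := by
  obtain ⟨hℓp, hp2⟩ := subInt_zero_iff.mp hp
  have key : (r.2 + 1) * 2 ^ ℓ < 2 ^ r.1 := by
    refine Nat.lt_of_mul_lt_mul_right (a := 2 ^ (p.1 - ℓ)) ?_
    calc (r.2 + 1) * 2 ^ ℓ * 2 ^ (p.1 - ℓ) = (r.2 + 1) * 2 ^ p.1 := by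
          rw [mul_assoc, ← pow_add, Nat.add_sub_cancel' hℓp]
      _ ≤ p.2 * 2 ^ r.1 := hleft
      _ < 2 ^ (p.1 - ℓ) * 2 ^ r.1 := Nat.mul_lt_mul_of_pos_right hp2 (Nat.two_pow_pos _)
      _ = 2 ^ r.1 * 2 ^ (p.1 - ℓ) := mul_comm _ _
  have hℓr : ℓ ≤ r.1 :=
    (Nat.pow_lt_pow_iff_right one_lt_two).mp ((Nat.le_mul_of_pos_left _ r.2.succ_pos).trans_lt key)
      |>.le
  refine subInt_zero_iff.mpr ⟨hℓr, Nat.lt_of_mul_lt_mul_right (a := 2 ^ ℓ) ?_⟩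
  rw [← pow_add, Nat.sub_add_cancel hℓr]
  exact (Nat.mul_le_mul_right _ r.2.le_succ).trans_lt key

lemma subtreeT_zero_eq_map {N ℓ : ℕ} (hℓ : ℓ ≤ N) :
    subtreeT N ℓ 0 = (DN (N - ℓ)).map ((addRightEmbedding ℓ).prodMap (.refl ℕ)) := by
  ext ⟨j, t⟩
  simp only [subtreeT, mem_filter, mem_map, mem_DN, subInt_zero_iff, Prod.exists,
    Function.Embedding.coe_prodMap, Prod.map_apply, addRightEmbedding_apply,
    Function.Embedding.refl_apply, Prod.mk.injEq]
  constructor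
  · rintro ⟨⟨hj, -⟩, hℓj, ht⟩
    exact ⟨j - ℓ, t, ⟨by omega, ht⟩, by omega, rfl⟩
  · rintro ⟨i, t, ⟨hi, ht⟩, rfl, rfl⟩
    refine ⟨⟨by omega, ht.trans_le (Nat.pow_le_pow_right two_pos (by omega))⟩, by omega, ?_⟩
    simpa using ht

lemma mem_filter_subInt_iff {M : ℕ} {p q : ℕ × ℕ} (hp : p.2 < 2 ^ p.1) :
    q ∈ (DN M).filter (subInt · p) ↔
      q.1 ∈ Icc p.1 M ∧ q.2 ∈ Ico (p.2 * 2 ^ (q.1 - p.1)) ((p.2 + 1) * 2 ^ (q.1 - p.1)) := by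
  rw [mem_filter, mem_DN, subInt_iff, mem_Icc, mem_Ico]
  constructor
  · rintro ⟨⟨hM, -⟩, hpq, ht⟩
    exact ⟨⟨hpq, hM⟩, ht⟩
  · rintro ⟨⟨hpq, hM⟩, ht⟩
    refine ⟨⟨hM, ht.2.trans_le ?_⟩, hpq, ht⟩
    calc (p.2 + 1) * 2 ^ (q.1 - p.1) ≤ 2 ^ p.1 * 2 ^ (q.1 - p.1) := Nat.mul_le_mul_right _ hp
      _ = 2 ^ q.1 := by rw [← pow_add, Nat.add_sub_cancel' hpq]

lemma sum_len_filter_subInt {M : ℕ} {p : ℕ × ℕ} (hp : p ∈ DN M) :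
    ∑ q ∈ (DN M).filter (subInt · p), len q = ((M : ℝ) - p.1 + 1) * len p := by
  obtain ⟨hpM, hp2⟩ := mem_DN.mp hp
  rw [sum_finset_product _ _ (fun j => Ico (p.2 * 2 ^ (j - p.1)) ((p.2 + 1) * 2 ^ (j - p.1)))
    fun q => mem_filter_subInt_iff hp2]
  have level : ∀ j ∈ Icc p.1 M,
      ∑ t ∈ Ico (p.2 * 2 ^ (j - p.1)) ((p.2 + 1) * 2 ^ (j - p.1)), len (j, t) = len p := by
    intro j hj
    simp only [len]
    rw [sum_const, Nat.card_Ico, add_one_mul, Nat.add_sub_cancel_left, nsmul_eq_mul,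
      ← Nat.sub_add_cancel (mem_Icc.mp hj).1, pow_add, Nat.add_sub_cancel, ← mul_assoc]
    push_cast
    rw [← mul_pow, mul_inv_cancel₀ two_ne_zero, one_pow, one_mul]
  rw [sum_congr rfl level, sum_const, Nat.card_Icc, nsmul_eq_mul,
    Nat.cast_sub (by omega : p.1 ≤ M + 1)]
  push_cast
  ring

lemma carleson_DN (M : ℕ) : carleson (DN M) = (M : ℝ) + 1 := by
  have h₀ : ((0 : ℕ), (0 : ℕ)) ∈ DN M := mem_DN.mpr ⟨Nat.zero_le _, by norm_num⟩
  apply IsGreatest.csSup_eq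
  constructor
  · refine ⟨(0, 0), h₀, ?_⟩
    rw [sum_len_filter_subInt h₀, mul_div_cancel_right₀ _ (by simp [len])]
    simp
  · rintro v ⟨p, hp, rfl⟩
    rw [sum_len_filter_subInt hp, mul_div_cancel_right₀ _ (by simp [len])]
    linarith [(Nat.cast_nonneg p.1 : (0 : ℝ) ≤ p.1)]

lemma postOrdinal_le_card_subtreeT {N ℓ : ℕ} {p : ℕ × ℕ} (hp : p ∈ subtreeT N ℓ 0) :
    postOrdinal N p ≤ (subtreeT N ℓ 0).card := by
  refine card_le_card fun r hr => ?_
  obtain ⟨hrN, hrp⟩ := mem_filter.mp hr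
  obtain ⟨-, hpℓ⟩ := mem_filter.mp hp
  refine mem_filter.mpr ⟨hrN, ?_⟩
  rcases hrp with hsub | hleft
  · exact subInt_trans hsub hpℓ
  · exact subInt_zero_of_left hleft hpℓ

lemma mem_DN_of_lexOrdinal_le_card {N M : ℕ} {q : ℕ × ℕ} (hq : q ∈ DN N)
    (h : lexOrdinal N q ≤ (DN M).card) : q ∈ DN M := by
  by_contra hqM
  obtain ⟨hqN, hq2⟩ := mem_DN.mp hq
  have hMq : M < q.1 := by
    by_contra! hle
    exact hqM (mem_DN.mpr ⟨hle, hq2⟩)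
  have hsub : insert q (DN M) ⊆ (DN N).filter (lexLE · q) := by
    refine insert_subset (mem_filter.mpr ⟨hq, Or.inr ⟨rfl, le_rfl⟩⟩) fun r hr => ?_
    have hrM := (mem_DN.mp hr).1
    exact mem_filter.mpr ⟨DN_mono (by omega) hr, Or.inl (by omega)⟩
  have := card_le_card hsub
  rw [card_insert_of_notMem hqM] at this
  exact absurd h (by unfold lexOrdinal; omega)

/-- The postorder rearrangement `τ_N` (the bijection of `D_N` sending the `n`-th
interval in postorder to the `n`-th interval in lexicographic order) maps the
subtree `T^N_{ℓ,0}` bijectively onto `D_{N-ℓ}`; hence `⟦τ_N(T^N_{ℓ,0})⟧ = N - ℓ + 1`. -/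
theorem tau_subtree_left (N ℓ : ℕ) (hℓ : ℓ ≤ N) (τ : ℕ × ℕ → ℕ × ℕ)
    (hbij : Set.BijOn τ (DN N) (DN N))
    (hτ : ∀ p ∈ DN N, lexOrdinal N (τ p) = postOrdinal N p) :
    (subtreeT N ℓ 0).image τ = DN (N - ℓ) ∧
    carleson ((subtreeT N ℓ 0).image τ) = (N : ℝ) - ℓ + 1 := by
  have hT : subtreeT N ℓ 0 ⊆ DN N := filter_subset _ _
  have hcard : (subtreeT N ℓ 0).card = (DN (N - ℓ)).card := by
    rw [subtreeT_zero_eq_map hℓ, card_map]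
  have hmaps : ∀ p ∈ subtreeT N ℓ 0, τ p ∈ DN (N - ℓ) := fun p hp =>
    mem_DN_of_lexOrdinal_le_card (hbij.mapsTo (hT hp))
      (by rw [hτ p (hT hp), ← hcard]; exact postOrdinal_le_card_subtreeT hp)
  have himage : (subtreeT N ℓ 0).image τ = DN (N - ℓ) :=
    eq_of_subset_of_card_le (image_subset_iff.mpr hmaps)
      (by rw [card_image_of_injOn (hbij.injOn.mono hT), hcard])
  refine ⟨himage, ?_⟩
  rw [himage, carleson_DN, Nat.cast_sub hℓ]
end

section
/- Let I ⊆ J be dyadic intervals in D_N with nonempty right fill-up R(I,J). Then N − log₂(1/|I|) + 1 ≤ ⟦C(I,J) ∪ R(I,J)⟧ ≤ N − log₂(1/|J|) + 2, where C(I,J) is the cone between I and J. -/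
open Finset

/-- The cone `C(I,J)` of dyadic intervals between `I` and `J` (for `I ⊆ J`): the chain
of ancestors of `I` at the levels from that of `J` down to that of `I`. -/
def cone (I J : ℕ × ℕ) : Finset (ℕ × ℕ) :=
  (Finset.Icc J.1 I.1).image fun m => (m, I.2 / 2 ^ (I.1 - m))

/-- The right fill-up `R(I,J)` of the cone `C(I,J)` inside `D_N`: all intervals of `D_N`
contained in `C_{i+1} \ C_i` for those steps of the cone where `C_i` is the left half
of `C_{i+1}` (i.e. the ancestor of `I` at level `m` has even position). -/
noncomputable def rightFill (N : ℕ) (I J : ℕ × ℕ) : Finset (ℕ × ℕ) :=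
  open Classical in
  (DN N).filter fun u => ∃ m ∈ Finset.Ioc J.1 I.1,
    (I.2 / 2 ^ (I.1 - m)) % 2 = 0 ∧ subInt u (m, I.2 / 2 ^ (I.1 - m) + 1)

/-- The "full tree" below position `b` at level `m`, down to level `N`. -/
def Tset (m b N : ℕ) : Finset (ℕ × ℕ) :=
  (Finset.Icc m N).biUnion fun lev =>
    (Finset.Ico (b * 2 ^ (lev - m)) ((b + 1) * 2 ^ (lev - m))).image fun k => (lev, k)

lemma mem_Tset {m b N : ℕ} {q : ℕ × ℕ} :
    q ∈ Tset m b N ↔ (m ≤ q.1 ∧ q.1 ≤ N) ∧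
      b * 2 ^ (q.1 - m) ≤ q.2 ∧ q.2 < (b + 1) * 2 ^ (q.1 - m) := by
  simp only [Tset, Finset.mem_biUnion, Finset.mem_Icc, Finset.mem_image, Finset.mem_Ico]
  constructor
  · rintro ⟨lev, hlev, k, hk, rfl⟩
    exact ⟨hlev, hk⟩
  · rintro ⟨h1, h2⟩
    exact ⟨q.1, h1, q.2, h2, rfl⟩

lemma len_nonneg (p : ℕ × ℕ) : 0 ≤ len p := by
  unfold len; positivity

lemma sum_Tset (m b N : ℕ) (h : m ≤ N) :
    ∑ q ∈ Tset m b N, len q = ((N - m + 1 : ℕ) : ℝ) * (2 : ℝ)⁻¹ ^ m := by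
  rw [Tset, Finset.sum_biUnion]
  · have : ∀ lev ∈ Finset.Icc m N,
        (∑ q ∈ (Finset.Ico (b * 2 ^ (lev - m)) ((b + 1) * 2 ^ (lev - m))).image
          (fun k => (lev, k)), len q) = (2 : ℝ)⁻¹ ^ m := by
      intro lev hlev
      rw [Finset.mem_Icc] at hlev
      rw [Finset.sum_image (by intro x _ y _ hxy; exact congrArg Prod.snd hxy)]
      have hcard : ((b + 1) * 2 ^ (lev - m) - b * 2 ^ (lev - m)) = 2 ^ (lev - m) := by
        rw [add_mul, one_mul, Nat.add_sub_cancel_left]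
      simp only [len]
      rw [Finset.sum_const, Nat.card_Ico, hcard, nsmul_eq_mul]
      obtain ⟨d, rfl⟩ : ∃ d, lev = m + d := ⟨lev - m, by omega⟩
      rw [Nat.add_sub_cancel_left]
      rw [pow_add]
      push_cast
      rw [mul_comm ((2:ℝ)⁻¹ ^ m) _, ← mul_assoc, ← mul_pow]
      norm_num
    rw [Finset.sum_congr rfl this, Finset.sum_const, Nat.card_Icc, nsmul_eq_mul]
    congr 2
    omega
  · intro x hx y hy hxy
    simp only [Finset.disjoint_left, Finset.mem_image, Finset.mem_Ico]
    rintro q ⟨k, _, rfl⟩ ⟨k', _, h'⟩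
    exact hxy (congrArg Prod.fst h').symm

lemma carleson_eq_sSup (S : Finset (ℕ × ℕ)) :
    carleson S =
      sSup ((fun p => (∑ q ∈ S.filter (fun q => subInt q p), len q) / len p) '' ↑S) := by
  unfold carleson
  congr 1
  ext v
  constructor
  · rintro ⟨p, hp, rfl⟩; exact ⟨p, hp, rfl⟩
  · rintro ⟨p, hp, rfl⟩; exact ⟨p, hp, rfl⟩

lemma le_carleson (S : Finset (ℕ × ℕ)) (p : ℕ × ℕ) (hp : p ∈ S) :
    (∑ q ∈ S.filter (fun q => subInt q p), len q) / len p ≤ carleson S := by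
  rw [carleson_eq_sSup]
  exact le_csSup ((S.finite_toSet.image _).bddAbove) ⟨p, hp, rfl⟩

lemma carleson_le (S : Finset (ℕ × ℕ)) (hS : S.Nonempty) (c : ℝ)
    (h : ∀ p ∈ S, (∑ q ∈ S.filter (fun q => subInt q p), len q) / len p ≤ c) :
    carleson S ≤ c := by
  rw [carleson_eq_sSup]
  apply csSup_le
  · obtain ⟨p, hp⟩ := hS
    exact ⟨_, p, hp, rfl⟩
  · rintro v ⟨p, hp, rfl⟩
    exact h p hp
/-- For dyadic `I ⊆ J` in `D_N` with nonempty right fill-up: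
`N - log₂(1/|I|) + 1 ≤ ⟦C(I,J) ∪ R(I,J)⟧ ≤ N - log₂(1/|J|) + 2`
(note `log₂(1/|I|)` is the level of `I`). -/
theorem carleson_cone_union_rightFill (N : ℕ) (I J : ℕ × ℕ)
    (hI : I ∈ DN N) (hJ : J ∈ DN N) (hIJ : subInt I J)
    (hne : (rightFill N I J).Nonempty) :
    (N : ℝ) - I.1 + 1 ≤ carleson (cone I J ∪ rightFill N I J) ∧
    carleson (cone I J ∪ rightFill N I J) ≤ (N : ℝ) - J.1 + 2 := by
  simp only [DN, Finset.mem_filter, Finset.mem_product, Finset.mem_range] at hI hJ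
  obtain ⟨⟨hI1, _⟩, hI2⟩ := hI
  obtain ⟨⟨hJ1, _⟩, _⟩ := hJ
  set S := cone I J ∪ rightFill N I J with hSdef
  have hlev : ∀ q ∈ S, J.1 ≤ q.1 ∧ q.1 ≤ N := by
    intro q hq
    rw [hSdef, Finset.mem_union] at hq
    rcases hq with hq | hq
    · rw [cone, Finset.mem_image] at hq
      obtain ⟨m, hm, rfl⟩ := hq
      rw [Finset.mem_Icc] at hm
      exact ⟨hm.1, by omega⟩
    · rw [rightFill, Finset.mem_filter] at hq
      obtain ⟨hqDN, m, hm, _, hsub⟩ := hq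
      simp only [DN, Finset.mem_filter, Finset.mem_product, Finset.mem_range] at hqDN
      rw [Finset.mem_Ioc] at hm
      have := hsub.1
      exact ⟨by omega, by omega⟩
  have hIS : I ∈ S := by
    rw [hSdef, Finset.mem_union]
    left
    rw [cone, Finset.mem_image]
    exact ⟨I.1, Finset.mem_Icc.2 ⟨hIJ.1, le_rfl⟩, by simp⟩
  constructor
  · -- lower bound
    obtain ⟨u, hu⟩ := hne
    rw [rightFill, Finset.mem_filter] at hu
    obtain ⟨huDN, m, hm, heven, husub⟩ := hu
    rw [Finset.mem_Ioc] at hm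
    set a := I.2 / 2 ^ (I.1 - m) with ha_def
    have hmN : m ≤ N := le_trans hm.2 (by omega)
    have ha : a < 2 ^ m := by
      rw [ha_def, Nat.div_lt_iff_lt_mul (pow_pos two_pos _), ← pow_add]
      have h' : m + (I.1 - m) = I.1 := by omega
      rw [h']
      exact hI2
    have ha2 : a + 2 ≤ 2 ^ m := by
      rcases Nat.lt_or_ge (a + 1) (2 ^ m) with h | h
      · omega
      · exfalso
        have hdvd : 2 ∣ 2 ^ m := dvd_pow_self 2 (by omega)
        omega
    have hp₀S : (m, a + 1) ∈ S := by
      rw [hSdef, Finset.mem_union]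
      right
      rw [rightFill, Finset.mem_filter]
      refine ⟨?_, m, Finset.mem_Ioc.2 hm, ?_, ?_⟩
      · simp only [DN, Finset.mem_filter, Finset.mem_product, Finset.mem_range]
        have h2mN : 2 ^ m ≤ 2 ^ N := Nat.pow_le_pow_right (by norm_num) hmN
        exact ⟨⟨by omega, by omega⟩, by omega⟩
      · rw [← ha_def]; exact heven
      · rw [← ha_def]; exact ⟨le_rfl, by simp⟩
    have Tsub : Tset m (a + 1) N ⊆ S.filter (fun q => subInt q (m, a + 1)) := by
      intro q hq
      rw [mem_Tset] at hq
      obtain ⟨⟨hq1, hq2⟩, hq3, hq4⟩ := hq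
      have hdiv : q.2 / 2 ^ (q.1 - m) = a + 1 := Nat.div_eq_of_lt_le hq3 hq4
      have hq2pow : q.2 < 2 ^ q.1 := by
        calc q.2 < (a + 1 + 1) * 2 ^ (q.1 - m) := hq4
        _ ≤ 2 ^ m * 2 ^ (q.1 - m) := Nat.mul_le_mul_right _ (by omega)
        _ = 2 ^ q.1 := by rw [← pow_add]; congr 1; omega
      rw [Finset.mem_filter]
      refine ⟨?_, hq1, hdiv⟩
      rw [hSdef, Finset.mem_union]
      right
      rw [rightFill, Finset.mem_filter]
      refine ⟨?_, m, Finset.mem_Ioc.2 hm, ?_, ?_⟩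
      · simp only [DN, Finset.mem_filter, Finset.mem_product, Finset.mem_range]
        have h2mN : 2 ^ q.1 ≤ 2 ^ N := Nat.pow_le_pow_right (by norm_num) hq2
        exact ⟨⟨by omega, by omega⟩, hq2pow⟩
      · rw [← ha_def]; exact heven
      · rw [← ha_def]; exact ⟨hq1, hdiv⟩
    have hsum : ((N - m + 1 : ℕ) : ℝ) * (2 : ℝ)⁻¹ ^ m ≤
        ∑ q ∈ S.filter (fun q => subInt q (m, a + 1)), len q := by
      rw [← sum_Tset m (a + 1) N hmN]
      exact Finset.sum_le_sum_of_subset_of_nonneg Tsub (fun i _ _ => len_nonneg i)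
    have hlp : len (m, a + 1) = (2 : ℝ)⁻¹ ^ m := rfl
    have hchain := le_carleson S (m, a + 1) hp₀S
    have hmid : ((N - m + 1 : ℕ) : ℝ) ≤
        (∑ q ∈ S.filter (fun q => subInt q (m, a + 1)), len q) / len (m, a + 1) := by
      rw [le_div_iff₀ (by rw [hlp]; positivity), hlp]
      exact hsum
    have hcast : ((N - m + 1 : ℕ) : ℝ) = (N : ℝ) - m + 1 := by
      push_cast [hmN]; ring
    have hmI : (m : ℝ) ≤ (I.1 : ℝ) := Nat.cast_le.2 hm.2
    linarith
  · -- upper bound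
    apply carleson_le S ⟨I, hIS⟩
    intro p hp
    obtain ⟨hpJ, hpN⟩ := hlev p hp
    have hsub : S.filter (fun q => subInt q p) ⊆ Tset p.1 p.2 N := by
      intro q hq
      rw [Finset.mem_filter] at hq
      obtain ⟨hqS, hq1, hq2⟩ := hq
      have hqN := (hlev q hqS).2
      have hd : 0 < 2 ^ (q.1 - p.1) := pow_pos (by norm_num) _
      rw [mem_Tset]
      refine ⟨⟨hq1, hqN⟩, ?_, ?_⟩
      · exact (Nat.le_div_iff_mul_le hd).1 (le_of_eq hq2.symm)
      · exact (Nat.div_lt_iff_lt_mul hd).1 (by omega)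
    have hsum : (∑ q ∈ S.filter (fun q => subInt q p), len q) ≤
        ((N - p.1 + 1 : ℕ) : ℝ) * (2 : ℝ)⁻¹ ^ p.1 := by
      rw [← sum_Tset p.1 p.2 N hpN]
      exact Finset.sum_le_sum_of_subset_of_nonneg hsub (fun i _ _ => len_nonneg i)
    have hlp : len p = (2 : ℝ)⁻¹ ^ p.1 := rfl
    have hmid : (∑ q ∈ S.filter (fun q => subInt q p), len q) / len p ≤
        ((N - p.1 + 1 : ℕ) : ℝ) := by
      rw [div_le_iff₀ (by rw [hlp]; positivity), hlp]
      exact hsum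
    have hcast : ((N - p.1 + 1 : ℕ) : ℝ) = (N : ℝ) - p.1 + 1 := by
      push_cast [hpN]; ring
    have hJp : (J.1 : ℝ) ≤ (p.1 : ℝ) := Nat.cast_le.2 hpJ
    linarith
end

section
/- For any bijection τ: D_N → D_N, the rearrangement operator T_τ: h_I ↦ h_{τ(I)} on BMO_N satisfies ‖T_τ x‖²_BMO ≤ ⟦τ(C)⟧ · ‖x‖²_BMO for every x with Haar support contained in a nonempty collection C ⊆ D_N; in particular ‖T_τ‖_{BMO_N} ≤ (N+1)^{1/2}. -/
/-!
Because `τ` is a bijection, every coefficient of `y = T_τ x` is a coefficient of `x`, and testing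
the BMO norm on the interval `I` itself gives `|x_I|² ≤ ‖x‖²_BMO`. Hence for every dyadic `p`,
`∑_{q ⊆ p} |y_q|² |q| ≤ ‖x‖²_BMO ∑_{q ∈ τ(C), q ⊆ p} |q|`. The maximal intervals of `τ(C)` inside
`p` are pairwise disjoint, so their lengths add up to at most `|p|`, and below each of them the
Carleson condition contributes a factor `⟦τ(C)⟧`. The same disjointness, applied to each of the
`N + 1` levels of `D_N`, gives `⟦τ(C)⟧ ≤ N + 1`.
-/

open Finset

/-- Squared `BMO_N` norm of a function `x = Σ_{I ∈ D_N} x_I h_I`, given by its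
coefficient function: `‖x‖²_BMO = sup_{I ∈ D_N} (1/|I|) Σ_{J ⊆ I} |x_J|² |J|`. -/
noncomputable def bmoSq (N : ℕ) (x : ℕ × ℕ → ℝ) : ℝ :=
  sSup {v : ℝ | ∃ p ∈ DN N,
    v = (∑ q ∈ (DN N).filter (fun q => subInt q p), (x q) ^ 2 * len q) / len p}

lemma mem_DN_iff {N : ℕ} {p : ℕ × ℕ} : p ∈ DN N ↔ p.1 ≤ N ∧ p.2 < 2 ^ p.1 := by
  simp only [DN, mem_filter, mem_product, mem_range]
  constructor
  · rintro ⟨⟨h1, _⟩, h3⟩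
    exact ⟨by omega, h3⟩
  · rintro ⟨h1, h2⟩
    exact ⟨⟨by omega, h2.trans_le (Nat.pow_le_pow_right two_pos h1)⟩, h2⟩

lemma len_pos (p : ℕ × ℕ) : 0 < len p := by unfold len; positivity

namespace subInt

lemma refl (p : ℕ × ℕ) : subInt p p := ⟨le_rfl, by simp⟩

lemma trans {q r p : ℕ × ℕ} (h₁ : subInt q r) (h₂ : subInt r p) : subInt q p := by
  refine ⟨h₂.1.trans h₁.1, ?_⟩
  rw [show q.1 - p.1 = (q.1 - r.1) + (r.1 - p.1) by have := h₁.1; have := h₂.1; omega,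
    pow_add, ← Nat.div_div_eq_div_mul, h₁.2, h₂.2]

lemma eq_of_fst_le {q p : ℕ × ℕ} (h : subInt q p) (hle : q.1 ≤ p.1) : q = p := by
  have hfst : q.1 = p.1 := le_antisymm hle h.1
  have hsnd := h.2
  rw [hfst, Nat.sub_self, pow_zero, Nat.div_one] at hsnd
  exact Prod.ext hfst hsnd

lemma of_subInt_of_fst_le {q p p' : ℕ × ℕ} (h : subInt q p) (h' : subInt q p')
    (hle : p.1 ≤ p'.1) : subInt p' p := by
  refine ⟨hle, ?_⟩
  have hsnd := h.2
  rw [show q.1 - p.1 = (q.1 - p'.1) + (p'.1 - p.1) by have := h'.1; omega,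
    pow_add, ← Nat.div_div_eq_div_mul, h'.2] at hsnd
  exact hsnd

lemma total_of_subInt {q p p' : ℕ × ℕ} (h : subInt q p) (h' : subInt q p') :
    subInt p' p ∨ subInt p p' :=
  (le_total p.1 p'.1).imp (of_subInt_of_fst_le h h') (of_subInt_of_fst_le h' h)

end subInt

def leaves (N : ℕ) (r : ℕ × ℕ) : Finset ℕ :=
  (range (2 ^ N)).filter fun k => subInt (N, k) r

lemma leaves_eq_Ico {N : ℕ} {r : ℕ × ℕ} (hr : r ∈ DN N) :
    leaves N r = Ico (r.2 * 2 ^ (N - r.1)) ((r.2 + 1) * 2 ^ (N - r.1)) := by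
  obtain ⟨hrN, hr2⟩ := mem_DN_iff.1 hr
  have hd : 0 < 2 ^ (N - r.1) := Nat.two_pow_pos _
  have hup : (r.2 + 1) * 2 ^ (N - r.1) ≤ 2 ^ N := by
    calc (r.2 + 1) * 2 ^ (N - r.1) ≤ 2 ^ r.1 * 2 ^ (N - r.1) := Nat.mul_le_mul_right _ hr2
      _ = 2 ^ N := by rw [← pow_add, Nat.add_sub_cancel' hrN]
  ext k
  have hdiv : k / 2 ^ (N - r.1) = r.2 ↔
      r.2 * 2 ^ (N - r.1) ≤ k ∧ k < (r.2 + 1) * 2 ^ (N - r.1) := by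
    rw [← Nat.le_div_iff_mul_le hd, ← Nat.div_lt_iff_lt_mul hd]
    omega
  simp only [leaves, subInt, mem_filter, mem_range, mem_Ico, hrN, true_and, hdiv]
  exact ⟨And.right, fun h => ⟨h.2.trans_le hup, h⟩⟩

lemma card_leaves {N : ℕ} {r : ℕ × ℕ} (hr : r ∈ DN N) : #(leaves N r) = 2 ^ (N - r.1) := by
  rw [leaves_eq_Ico hr, Nat.card_Ico, add_one_mul, Nat.add_sub_cancel_left]

lemma len_eq_card_leaves_div {N : ℕ} {r : ℕ × ℕ} (hr : r ∈ DN N) :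
    len r = #(leaves N r) / (2 : ℝ) ^ N := by
  rw [card_leaves hr, Nat.cast_pow, Nat.cast_ofNat, pow_sub₀ _ two_ne_zero (mem_DN_iff.1 hr).1,
    len, inv_pow]
  field_simp

lemma sum_len_le_of_isAntichain {N : ℕ} {p : ℕ × ℕ} (hp : p ∈ DN N) {S : Finset (ℕ × ℕ)}
    (hS : S ⊆ DN N) (hsub : ∀ r ∈ S, subInt r p) (hanti : IsAntichain subInt (S : Set (ℕ × ℕ))) :
    ∑ r ∈ S, len r ≤ len p := by
  have hdisj : (S : Set (ℕ × ℕ)).PairwiseDisjoint (leaves N) := by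
    intro r hr r' hr' hne
    refine Finset.disjoint_left.2 fun k hk hk' => ?_
    rcases subInt.total_of_subInt (mem_filter.1 hk).2 (mem_filter.1 hk').2 with h | h
    · exact hanti hr' hr (Ne.symm hne) h
    · exact hanti hr hr' hne h
  have hcover : S.biUnion (leaves N) ⊆ leaves N p := by
    intro k hk
    obtain ⟨r, hr, hk⟩ := mem_biUnion.1 hk
    obtain ⟨hkN, hkr⟩ := mem_filter.1 hk
    exact mem_filter.2 ⟨hkN, hkr.trans (hsub r hr)⟩
  have hcard : (∑ r ∈ S, #(leaves N r) : ℝ) ≤ #(leaves N p) := by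
    exact_mod_cast (card_biUnion hdisj).symm.trans_le (card_le_card hcover)
  rw [sum_congr rfl fun r hr => len_eq_card_leaves_div (hS hr), ← sum_div,
    len_eq_card_leaves_div hp]
  gcongr

lemma sum_len_subInt_le_succ_mul {N : ℕ} {p : ℕ × ℕ} (hp : p ∈ DN N) :
    ∑ q ∈ (DN N).filter (subInt · p), len q ≤ ((N : ℝ) + 1) * len p := by
  set s := (DN N).filter (subInt · p)
  have hlevel : ∀ q ∈ s, q.1 ∈ range (N + 1) := fun q hq =>
    mem_range.2 (Nat.lt_succ_of_le (mem_DN_iff.1 (mem_filter.1 hq).1).1)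
  have hpack : ∀ ℓ ∈ range (N + 1), ∑ q ∈ s.filter (·.1 = ℓ), len q ≤ len p := by
    intro ℓ _
    refine sum_len_le_of_isAntichain hp (fun q hq => (mem_filter.1 (mem_filter.1 hq).1).1)
      (fun q hq => (mem_filter.1 (mem_filter.1 hq).1).2) ?_
    intro r hr r' hr' hne hsub
    have : r.1 = r'.1 := ((mem_filter.1 hr).2).trans (mem_filter.1 hr').2.symm
    exact hne (hsub.eq_of_fst_le this.le)
  calc ∑ q ∈ s, len q = ∑ ℓ ∈ range (N + 1), ∑ q ∈ s.filter (·.1 = ℓ), len q :=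
        (sum_fiberwise_of_maps_to hlevel len).symm
    _ ≤ ∑ _ℓ ∈ range (N + 1), len p := sum_le_sum hpack
    _ = ((N : ℝ) + 1) * len p := by simp

lemma sum_biUnion_le_sum_sum {ι β : Type*} [DecidableEq β] {s : Finset ι} {t : ι → Finset β}
    {f : β → ℝ} (hf : ∀ b, 0 ≤ f b) :
    ∑ b ∈ s.biUnion t, f b ≤ ∑ i ∈ s, ∑ b ∈ t i, f b := by
  rw [← sup_eq_biUnion]
  refine s.apply_sup_le_sum (f := fun u => ∑ b ∈ u, f b) sum_empty fun {u v} => ?_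
  have := sum_union_inter (s₁ := u) (s₂ := v) (f := f)
  have := sum_nonneg fun b (_ : b ∈ u ∩ v) => hf b
  simp only [sup_eq_union]
  linarith

lemma le_sSup_exists_mem_eq {α : Type*} {s : Finset α} (f : α → ℝ) {a : α} (ha : a ∈ s) :
    f a ≤ sSup {v : ℝ | ∃ p ∈ s, v = f p} := by
  refine le_csSup (Set.Finite.bddAbove ((s.finite_toSet.image f).subset ?_)) ⟨a, ha, rfl⟩
  rintro _ ⟨p, hp, rfl⟩
  exact ⟨p, hp, rfl⟩

lemma sSup_exists_mem_eq_le {α : Type*} {s : Finset α} {f : α → ℝ} {b : ℝ} (hb : 0 ≤ b)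
    (h : ∀ p ∈ s, f p ≤ b) : sSup {v : ℝ | ∃ p ∈ s, v = f p} ≤ b :=
  Real.sSup_le (by rintro _ ⟨p, hp, rfl⟩; exact h p hp) hb

lemma exists_maximal_subInt {S : Finset (ℕ × ℕ)} {q : ℕ × ℕ} (hq : q ∈ S) :
    ∃ r ∈ S, subInt q r ∧ ∀ r' ∈ S, subInt r r' → r' = r := by
  obtain ⟨r, hr, hmin⟩ :=
    exists_min_image (S.filter (subInt q ·)) Prod.fst ⟨q, mem_filter.2 ⟨hq, subInt.refl q⟩⟩
  obtain ⟨hrS, hqr⟩ := mem_filter.1 hr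
  exact ⟨r, hrS, hqr, fun r' hr' h =>
    (h.eq_of_fst_le (hmin r' (mem_filter.2 ⟨hr', hqr.trans h⟩))).symm⟩

lemma carleson_nonneg (E : Finset (ℕ × ℕ)) : 0 ≤ carleson E :=
  Real.sSup_nonneg <| by
    rintro _ ⟨p, -, rfl⟩
    exact div_nonneg (sum_nonneg fun q _ => (len_pos q).le) (len_pos p).le

lemma carleson_le_succ {N : ℕ} {E : Finset (ℕ × ℕ)} (hE : E ⊆ DN N) :
    carleson E ≤ (N : ℝ) + 1 := by
  refine sSup_exists_mem_eq_le (by positivity) fun r hr => ?_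
  rw [div_le_iff₀ (len_pos r)]
  calc ∑ q ∈ E.filter (subInt · r), len q ≤ ∑ q ∈ (DN N).filter (subInt · r), len q :=
        sum_le_sum_of_subset_of_nonneg (filter_subset_filter _ hE) fun q _ _ => (len_pos q).le
    _ ≤ ((N : ℝ) + 1) * len r := sum_len_subInt_le_succ_mul (hE hr)

lemma sum_len_subInt_le_carleson_mul {E : Finset (ℕ × ℕ)} {r : ℕ × ℕ} (hr : r ∈ E) :
    ∑ q ∈ E.filter (subInt · r), len q ≤ carleson E * len r :=
  (div_le_iff₀ (len_pos r)).1
    (le_sSup_exists_mem_eq (fun p => (∑ q ∈ E.filter (subInt · p), len q) / len p) hr)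

lemma sum_len_subInt_le_carleson_mul_of_mem_DN {N : ℕ} {E : Finset (ℕ × ℕ)} (hE : E ⊆ DN N)
    {p : ℕ × ℕ} (hp : p ∈ DN N) :
    ∑ q ∈ E.filter (subInt · p), len q ≤ carleson E * len p := by
  set Ep := E.filter (subInt · p)
  set M := Ep.filter fun r => ∀ r' ∈ Ep, subInt r r' → r' = r
  have hME : M ⊆ E := (filter_subset _ _).trans (filter_subset _ _)
  have hanti : IsAntichain subInt (M : Set (ℕ × ℕ)) := fun r hr r' hr' hne h =>
    hne ((mem_filter.1 hr).2 r' (mem_filter.1 hr').1 h).symm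
  have hcover : Ep ⊆ M.biUnion fun r => E.filter (subInt · r) := by
    intro q hq
    obtain ⟨r, hr, hqr, hmax⟩ := exists_maximal_subInt hq
    exact mem_biUnion.2 ⟨r, mem_filter.2 ⟨hr, hmax⟩, mem_filter.2 ⟨(mem_filter.1 hq).1, hqr⟩⟩
  have hpack : ∑ r ∈ M, len r ≤ len p :=
    sum_len_le_of_isAntichain hp (hME.trans hE)
      (fun r hr => (mem_filter.1 (mem_filter.1 hr).1).2) hanti
  calc ∑ q ∈ Ep, len q ≤ ∑ q ∈ M.biUnion fun r => E.filter (subInt · r), len q :=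
        sum_le_sum_of_subset_of_nonneg hcover fun q _ _ => (len_pos q).le
    _ ≤ ∑ r ∈ M, ∑ q ∈ E.filter (subInt · r), len q :=
        sum_biUnion_le_sum_sum fun q => (len_pos q).le
    _ ≤ ∑ r ∈ M, carleson E * len r :=
        sum_le_sum fun r hr => sum_len_subInt_le_carleson_mul (hME hr)
    _ = carleson E * ∑ r ∈ M, len r := (mul_sum _ _ _).symm
    _ ≤ carleson E * len p := mul_le_mul_of_nonneg_left hpack (carleson_nonneg E)

lemma bmoSq_nonneg (N : ℕ) (x : ℕ × ℕ → ℝ) : 0 ≤ bmoSq N x :=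
  Real.sSup_nonneg <| by
    rintro _ ⟨p, -, rfl⟩
    exact div_nonneg (sum_nonneg fun q _ => mul_nonneg (sq_nonneg _) (len_pos q).le)
      (len_pos p).le

lemma sq_le_bmoSq {N : ℕ} (x : ℕ × ℕ → ℝ) {p : ℕ × ℕ} (hp : p ∈ DN N) : x p ^ 2 ≤ bmoSq N x := by
  refine le_trans ?_ (le_sSup_exists_mem_eq _ hp)
  rw [le_div_iff₀ (len_pos p)]
  exact single_le_sum (f := fun q => x q ^ 2 * len q)
    (fun q _ => mul_nonneg (sq_nonneg _) (len_pos q).le) (mem_filter.2 ⟨hp, subInt.refl p⟩)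

lemma bmoSq_le_carleson_mul {N : ℕ} {E : Finset (ℕ × ℕ)} (hE : E ⊆ DN N) {y : ℕ × ℕ → ℝ}
    {B : ℝ} (hsupp : ∀ q ∈ DN N, y q ≠ 0 → q ∈ E) (hbound : ∀ q ∈ DN N, y q ^ 2 ≤ B) :
    bmoSq N y ≤ carleson E * B := by
  have hB : 0 ≤ B := (sq_nonneg _).trans (hbound (0, 0) (by simp [mem_DN_iff]))
  refine sSup_exists_mem_eq_le (mul_nonneg (carleson_nonneg E) hB) fun p hp => ?_
  rw [div_le_iff₀ (len_pos p)]
  have hrestrict : ∑ q ∈ E.filter (subInt · p), y q ^ 2 * len q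
      = ∑ q ∈ (DN N).filter (subInt · p), y q ^ 2 * len q := by
    refine sum_subset (filter_subset_filter _ hE) fun q hq hqE => ?_
    obtain ⟨hqN, hqp⟩ := mem_filter.1 hq
    have : y q = 0 := by_contra fun h => hqE (mem_filter.2 ⟨hsupp q hqN h, hqp⟩)
    simp [this]
  calc ∑ q ∈ (DN N).filter (subInt · p), y q ^ 2 * len q
      = ∑ q ∈ E.filter (subInt · p), y q ^ 2 * len q := hrestrict.symm
    _ ≤ ∑ q ∈ E.filter (subInt · p), B * len q := by
        gcongr with q hq
        · exact (len_pos q).le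
        · exact hbound q (hE (mem_filter.1 hq).1)
    _ = B * ∑ q ∈ E.filter (subInt · p), len q := (mul_sum _ _ _).symm
    _ ≤ B * (carleson E * len p) :=
        mul_le_mul_of_nonneg_left (sum_len_subInt_le_carleson_mul_of_mem_DN hE hp) hB
    _ = carleson E * B * len p := by ring

theorem rearrangement_bmo_bound_general (N : ℕ) (τ : ℕ × ℕ → ℕ × ℕ)
    (hbij : Set.BijOn τ (DN N) (DN N))
    (C : Finset (ℕ × ℕ)) (hC : C ⊆ DN N)
    (x y : ℕ × ℕ → ℝ) (hsupp : ∀ p, x p ≠ 0 → p ∈ C)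
    (hy : ∀ p ∈ DN N, y (τ p) = x p) :
    bmoSq N y ≤ carleson (C.image τ) * bmoSq N x ∧
    bmoSq N y ≤ ((N : ℝ) + 1) * bmoSq N x := by
  have hτC : C.image τ ⊆ DN N := by
    intro q hq
    obtain ⟨p, hp, rfl⟩ := mem_image.1 hq
    exact hbij.mapsTo (hC hp)
  have hsuppy : ∀ q ∈ DN N, y q ≠ 0 → q ∈ C.image τ := by
    intro q hq hyq
    obtain ⟨p, hp, rfl⟩ := hbij.surjOn hq
    exact mem_image_of_mem τ (hsupp p (hy p hp ▸ hyq))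
  have hbound : ∀ q ∈ DN N, y q ^ 2 ≤ bmoSq N x := by
    intro q hq
    obtain ⟨p, hp, rfl⟩ := hbij.surjOn hq
    exact hy p hp ▸ sq_le_bmoSq x hp
  have hcarleson := bmoSq_le_carleson_mul hτC hsuppy hbound
  exact ⟨hcarleson,
    hcarleson.trans (mul_le_mul_of_nonneg_right (carleson_le_succ hτC) (bmoSq_nonneg N x))⟩

/-- For any bijection `τ` of `D_N`, the rearrangement operator `T_τ : h_I ↦ h_{τ(I)}`
satisfies `‖T_τ x‖²_BMO ≤ ⟦τ(C)⟧ ‖x‖²_BMO` whenever the Haar support of `x` is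
contained in the nonempty collection `C ⊆ D_N`; in particular
`‖T_τ x‖²_BMO ≤ (N+1) ‖x‖²_BMO`, i.e. `‖T_τ‖ ≤ (N+1)^{1/2}`.
Here `y` is the coefficient function of `T_τ x`, i.e. `y_{τ(I)} = x_I`. -/
theorem rearrangement_bmo_bound (N : ℕ) (τ : ℕ × ℕ → ℕ × ℕ)
    (hbij : Set.BijOn τ (DN N) (DN N))
    (C : Finset (ℕ × ℕ)) (hC : C ⊆ DN N) (hne : C.Nonempty)
    (x y : ℕ × ℕ → ℝ) (hsupp : ∀ p, x p ≠ 0 → p ∈ C)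
    (hy : ∀ p ∈ DN N, y (τ p) = x p) :
    bmoSq N y ≤ carleson (C.image τ) * bmoSq N x ∧
    bmoSq N y ≤ ((N : ℝ) + 1) * bmoSq N x :=
  rearrangement_bmo_bound_general N τ hbij C hC x y hsupp hy
end
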